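/- Let Λ be a real n×n matrix which is both a Lorentz matrix (Λᵀ η Λ = η) and pseudosymmetric (Λᵀ = η Λ η), and suppose Λ ≠ I. Then −1 is an eigenvalue of Λ: there exists a nonzero vector v ∈ ℝⁿ with Λ v = −v. (Consequently the only Lorentz pseudosymmetric matrix in a sufficiently small neighborhood of the identity is the identity itself.) -/
import Mathlib


open Matrix

/-- The `n × n` Minkowski matrix `diag(1, -1, …, -1)`. -/
noncomputable def eta (n : ℕ) : Matrix (Fin n) (Fin n) ℝ :=
  Matrix.diagonal (fun i => if (i : ℕ) = 0 then (1 : ℝ) else -1)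

lemma eta_mul_eta (n : ℕ) : eta n * eta n = 1 := by
  unfold eta
  rw [Matrix.diagonal_mul_diagonal]
  have : (fun i : Fin n => (if (i : ℕ) = 0 then (1 : ℝ) else -1) *
      (if (i : ℕ) = 0 then (1 : ℝ) else -1)) = fun _ => 1 := by
    funext i; by_cases h : (i : ℕ) = 0 <;> simp [h]
  rw [this, Matrix.diagonal_one]

/-- A Lorentz (`Λᵀ η Λ = η`) pseudosymmetric (`Λᵀ = η Λ η`) matrix different from the
identity has `-1` as an eigenvalue: there is a nonzero `v` with `Λ v = -v`. -/
theorem lorentz_pseudosymmetric_ne_one_has_eigenvalue_neg_one (n : ℕ) (hn : 1 ≤ n)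
    (Λ : Matrix (Fin n) (Fin n) ℝ)
    (hLor : Λᵀ * eta n * Λ = eta n)
    (hPseudo : Λᵀ = eta n * Λ * eta n)
    (hne : Λ ≠ 1) :
    ∃ v : Fin n → ℝ, v ≠ 0 ∧ Λ.mulVec v = -v := by
  have hsq : Λ * Λ = 1 := by
    have h : eta n * Λ * eta n * eta n * Λ = eta n := by
      rw [← hPseudo]; exact hLor
    rw [mul_assoc (eta n * Λ), eta_mul_eta, mul_one] at h
    have h2 := congrArg (fun M => eta n * M) h
    simpa [← mul_assoc, eta_mul_eta] using h2
  -- find w with Λw ≠ w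
  have hw : ∃ w : Fin n → ℝ, Λ.mulVec w ≠ w := by
    by_contra h
    push_neg at h
    apply hne
    ext i j
    have := congrFun (h (Pi.single j 1)) i
    simpa [Matrix.mulVec_single, Matrix.one_apply, Pi.single_apply, eq_comm] using this
  obtain ⟨w, hw⟩ := hw
  refine ⟨Λ.mulVec w - w, sub_ne_zero.mpr hw, ?_⟩
  have : Λ.mulVec (Λ.mulVec w) = w := by
    rw [Matrix.mulVec_mulVec, hsq, Matrix.one_mulVec]
  rw [Matrix.mulVec_sub, this]
  abel
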